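/- arXiv:2010.15819 — 2 statements merged into one kernel-verified Lean document; each statement's English description precedes it below -/
import Mathlib

section
/- In the setting of the previous statement, suppose additionally that σ_min(P_Ω L) ≥ √(p/2) and ‖P_Ω t₂‖ ≤ (√(7p)/2)‖t₂‖ for some p > 0. Then the partial-observation residual ψ = ‖L x̃ − t‖ and the full-observation residual φ = ‖L x* − t‖ = ‖t₂‖ satisfy φ ≤ ψ ≤ (3/√2)·φ. -/
/-!
Split `x̃ = x* + u` with `u = (P_Ω L)† P_Ω t₂`: the pseudoinverse recovers the component
`t₁ = L x*` exactly. As `L` is an isometry and `Lᵀ t₂ = 0`, Pythagoras gives `ψ² = ‖u‖² + ‖t₂‖²`.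
Since `P_Ω L (P_Ω L)†` is an orthogonal projection,
`σ_min² ‖u‖² ≤ ‖P_Ω L u‖² ≤ ‖P_Ω t₂‖² ≤ (7p/4) ‖t₂‖²`, so `‖u‖² ≤ (7/2) ‖t₂‖²` and `ψ² ≤ (9/2) φ²`.
-/

open Matrix

/-- Moore–Penrose pseudoinverse of a full-column-rank matrix. -/
noncomputable def pinv {s r : ℕ} (B : Matrix (Fin s) (Fin r) ℝ) : Matrix (Fin r) (Fin s) ℝ :=
  (Bᵀ * B)⁻¹ * Bᵀ

/-- Smallest singular value of a real matrix. -/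
noncomputable def sMin {m n : Type*} [Fintype m] [Fintype n] [DecidableEq n]
    (A : Matrix m n ℝ) : ℝ :=
  Real.sqrt (⨅ i, (Matrix.isHermitian_conjTranspose_mul_self A).eigenvalues i)

/-- Euclidean norm of a finite real vector. -/
noncomputable def enorm' {m : ℕ} (v : Fin m → ℝ) : ℝ :=
  Real.sqrt (∑ i, v i ^ 2)

namespace Matrix

variable {n : Type*} [Fintype n]

theorem dotProduct_self_nonneg (x : n → ℝ) : 0 ≤ x ⬝ᵥ x :=
  Finset.sum_nonneg fun _ _ => mul_self_nonneg _

theorem dotProduct_self_add_of_dotProduct_eq_zero {x y : n → ℝ} (h : x ⬝ᵥ y = 0) :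
    (x + y) ⬝ᵥ (x + y) = x ⬝ᵥ x + y ⬝ᵥ y := by
  rw [add_dotProduct, dotProduct_add, dotProduct_add, dotProduct_comm y x, h]
  ring

theorem dotProduct_self_le_of_dotProduct_sub_eq_zero {x y : n → ℝ} (h : x ⬝ᵥ (y - x) = 0) :
    x ⬝ᵥ x ≤ y ⬝ᵥ y := by
  have hy := dotProduct_self_add_of_dotProduct_eq_zero h
  rw [add_sub_cancel] at hy
  linarith [dotProduct_self_nonneg (y - x)]

theorem IsHermitian.mul_dotProduct_self_le_dotProduct_mulVec [DecidableEq n]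
    {M : Matrix n n ℝ} (hM : M.IsHermitian) {c : ℝ} (hc : ∀ i, c ≤ hM.eigenvalues i)
    (x : n → ℝ) : c * (x ⬝ᵥ x) ≤ x ⬝ᵥ (M *ᵥ x) := by
  -- conjugating `diagonal eigenvalues - c • 1` by the eigenvector unitary gives `M - c • 1`
  have hshift : (M - c • (1 : Matrix n n ℝ)).PosSemidef := by
    have hdiag :
        (diagonal (RCLike.ofReal ∘ hM.eigenvalues) - c • (1 : Matrix n n ℝ)).PosSemidef := by
      rw [smul_one_eq_diagonal, diagonal_sub]
      exact posSemidef_diagonal_iff.mpr fun i => sub_nonneg.mpr (hc i)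
    have := (Unitary.isUnit_coe (U := hM.eigenvectorUnitary)).posSemidef_star_right_conjugate_iff
      |>.mpr hdiag
    rwa [Matrix.mul_sub, Matrix.sub_mul, Matrix.mul_smul, Matrix.smul_mul, mul_one,
      Unitary.mul_star_self_of_mem hM.eigenvectorUnitary.2,
      ← Unitary.conjStarAlgAut_apply (S := ℝ), ← hM.spectral_theorem] at this
  have := hshift.dotProduct_mulVec_nonneg x
  rw [star_trivial, sub_mulVec, smul_mulVec, one_mulVec, dotProduct_sub, dotProduct_smul,
    smul_eq_mul] at this
  linarith

theorem dotProduct_self_mulVec_sub_of_transpose_mul_self_eq_one {m r : Type*}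
    [Fintype m] [Fintype r] [DecidableEq r] {L : Matrix m r ℝ} (hL : Lᵀ * L = 1)
    {v : m → ℝ} (hv : Lᵀ *ᵥ v = 0) (u : r → ℝ) :
    (L *ᵥ u - v) ⬝ᵥ (L *ᵥ u - v) = u ⬝ᵥ u + v ⬝ᵥ v := by
  have horth : (L *ᵥ u) ⬝ᵥ (-v) = 0 := by
    rw [dotProduct_comm, ← dotProduct_transpose_mulVec, mulVec_neg, hv, neg_zero,
      dotProduct_zero]
  rw [sub_eq_add_neg, dotProduct_self_add_of_dotProduct_eq_zero horth, neg_dotProduct_neg,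
    ← dotProduct_transpose_mulVec, mulVec_mulVec, hL, one_mulVec]

end Matrix

section SingularValue

variable {m n : Type*} [Fintype m] [Fintype n] [DecidableEq n]

theorem sMin_sq_le_eigenvalues (A : Matrix m n ℝ) (i : n) :
    sMin A ^ 2 ≤ (isHermitian_conjTranspose_mul_self A).eigenvalues i := by
  rw [sMin, Real.sq_sqrt (Real.iInf_nonneg (eigenvalues_conjTranspose_mul_self_nonneg A))]
  exact ciInf_le (Finite.bddBelow_range _) i

theorem sMin_sq_mul_dotProduct_self_le (A : Matrix m n ℝ) (x : n → ℝ) :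
    sMin A ^ 2 * (x ⬝ᵥ x) ≤ (A *ᵥ x) ⬝ᵥ (A *ᵥ x) := by
  have := (isHermitian_conjTranspose_mul_self A).mul_dotProduct_self_le_dotProduct_mulVec
    (sMin_sq_le_eigenvalues A) x
  rwa [conjTranspose_eq_transpose_of_trivial, ← mulVec_mulVec, dotProduct_transpose_mulVec]
    at this

theorem isUnit_det_transpose_mul_self_of_sMin_pos {A : Matrix m n ℝ} (hA : 0 < sMin A) :
    IsUnit (Aᵀ * A).det := by
  have hpos := (isHermitian_conjTranspose_mul_self A).posDef_iff_eigenvalues_pos.mpr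
    fun i => (pow_pos hA 2).trans_le (sMin_sq_le_eigenvalues A i)
  rw [conjTranspose_eq_transpose_of_trivial] at hpos
  exact hpos.det_pos.ne'.isUnit

end SingularValue

section Pseudoinverse

variable {s r : ℕ} {B : Matrix (Fin s) (Fin r) ℝ}

theorem pinv_mul_self (hB : IsUnit (Bᵀ * B).det) : pinv B * B = 1 := by
  rw [pinv, Matrix.mul_assoc, nonsing_inv_mul _ hB]

theorem transpose_mul_self_mul_pinv (hB : IsUnit (Bᵀ * B).det) : Bᵀ * B * pinv B = Bᵀ := by
  rw [pinv, ← Matrix.mul_assoc, mul_nonsing_inv _ hB, Matrix.one_mul]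

theorem pinv_mulVec_mulVec (hB : IsUnit (Bᵀ * B).det) (x : Fin r → ℝ) :
    pinv B *ᵥ (B *ᵥ x) = x := by
  rw [mulVec_mulVec, pinv_mul_self hB, one_mulVec]

theorem mulVec_pinv_dotProduct_self_le (hB : IsUnit (Bᵀ * B).det) (w : Fin s → ℝ) :
    (B *ᵥ (pinv B *ᵥ w)) ⬝ᵥ (B *ᵥ (pinv B *ᵥ w)) ≤ w ⬝ᵥ w := by
  refine dotProduct_self_le_of_dotProduct_sub_eq_zero ?_
  rw [dotProduct_comm, ← dotProduct_transpose_mulVec, mulVec_sub, mulVec_mulVec,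
    mulVec_mulVec, transpose_mul_self_mul_pinv hB, sub_self, dotProduct_zero]

theorem sMin_sq_mul_pinv_mulVec_dotProduct_self_le (hB : IsUnit (Bᵀ * B).det) (w : Fin s → ℝ) :
    sMin B ^ 2 * ((pinv B *ᵥ w) ⬝ᵥ (pinv B *ᵥ w)) ≤ w ⬝ᵥ w :=
  (sMin_sq_mul_dotProduct_self_le B _).trans (mulVec_pinv_dotProduct_self_le hB w)

end Pseudoinverse

theorem enorm'_eq_sqrt_dotProduct {m : ℕ} (v : Fin m → ℝ) : enorm' v = Real.sqrt (v ⬝ᵥ v) := by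
  simp only [enorm', dotProduct, pow_two]

theorem enorm'_nonneg {m : ℕ} (v : Fin m → ℝ) : 0 ≤ enorm' v :=
  Real.sqrt_nonneg _

theorem enorm'_sq {m : ℕ} (v : Fin m → ℝ) : enorm' v ^ 2 = v ⬝ᵥ v := by
  rw [enorm'_eq_sqrt_dotProduct, Real.sq_sqrt (dotProduct_self_nonneg v)]

theorem enorm'_le_mul_enorm'_iff {m k : ℕ} {v : Fin m → ℝ} {w : Fin k → ℝ} {c : ℝ}
    (hc : 0 ≤ c) : enorm' v ≤ c * enorm' w ↔ v ⬝ᵥ v ≤ c ^ 2 * (w ⬝ᵥ w) := by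
  rw [← pow_le_pow_iff_left₀ (enorm'_nonneg v) (mul_nonneg hc (enorm'_nonneg w))
    two_ne_zero,
    mul_pow, enorm'_sq, enorm'_sq]

theorem partial_ls_residual_bounds_general {m r s : ℕ}
    (L : Matrix (Fin m) (Fin r) ℝ) (hL : Lᵀ * L = 1)
    (t t₁ t₂ : Fin m → ℝ) (ht : t = t₁ + t₂)
    (ht₁ : L *ᵥ (Lᵀ *ᵥ t₁) = t₁) (ht₂ : Lᵀ *ᵥ t₂ = 0)
    (P : Matrix (Fin s) (Fin m) ℝ)
    (xtil : Fin r → ℝ)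
    (hxtil : xtil = pinv (P * L) *ᵥ (P *ᵥ t))
    (p : ℝ) (hp : 0 < p)
    (hsmin : Real.sqrt (p / 2) ≤ sMin (P * L))
    (hPt₂ : enorm' (P *ᵥ t₂) ≤ Real.sqrt (7 * p) / 2 * enorm' t₂) :
    enorm' t₂ ≤ enorm' (L *ᵥ xtil - t) ∧
    enorm' (L *ᵥ xtil - t) ≤ 3 / Real.sqrt 2 * enorm' t₂ := by
  set B := P * L
  have hB : IsUnit (Bᵀ * B).det :=
    isUnit_det_transpose_mul_self_of_sMin_pos ((Real.sqrt_pos.mpr (by positivity)).trans_le hsmin)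
  set u := pinv B *ᵥ (P *ᵥ t₂)
  have hxtil_eq : xtil = Lᵀ *ᵥ t₁ + u := by
    have hPt₁ : P *ᵥ t₁ = B *ᵥ (Lᵀ *ᵥ t₁) := by rw [← mulVec_mulVec, ht₁]
    rw [hxtil, ht, mulVec_add, mulVec_add, hPt₁, pinv_mulVec_mulVec hB]
  have hres : (L *ᵥ xtil - t) ⬝ᵥ (L *ᵥ xtil - t) = u ⬝ᵥ u + t₂ ⬝ᵥ t₂ := by
    rw [hxtil_eq, mulVec_add, ht₁, ht, add_sub_add_left_eq_sub]
    exact dotProduct_self_mulVec_sub_of_transpose_mul_self_eq_one hL ht₂ u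
  have hPt₂_sq := (enorm'_le_mul_enorm'_iff (by positivity)).mp hPt₂
  rw [div_pow, Real.sq_sqrt (by positivity)] at hPt₂_sq
  have hu : u ⬝ᵥ u ≤ 7 / 2 * (t₂ ⬝ᵥ t₂) := by
    have hsmin_sq : p / 2 ≤ sMin B ^ 2 := (Real.sqrt_le_iff.mp hsmin).2
    have hPu := (mul_le_mul_of_nonneg_right hsmin_sq (dotProduct_self_nonneg u)).trans
      (sMin_sq_mul_pinv_mulVec_dotProduct_self_le hB (P *ᵥ t₂))
    refine le_of_mul_le_mul_left ?_ (half_pos hp)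
    linarith
  constructor
  · rw [enorm'_eq_sqrt_dotProduct, enorm'_eq_sqrt_dotProduct, hres]
    exact Real.sqrt_le_sqrt (le_add_of_nonneg_left (dotProduct_self_nonneg u))
  · rw [enorm'_le_mul_enorm'_iff (by positivity), hres, div_pow, Real.sq_sqrt zero_le_two]
    linarith

/-- In the setting of the partial least-squares problem, if moreover
`σ_min(P_Ω L) ≥ √(p/2)` and `‖P_Ω t₂‖ ≤ (√(7p)/2)‖t₂‖` for some `p > 0`, then the
partial-observation residual `ψ = ‖L x̃ − t‖` and the full-observation residual
`φ = ‖t₂‖` satisfy `φ ≤ ψ ≤ (3/√2)φ`. -/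
theorem partial_ls_residual_bounds {m r s : ℕ}
    (L : Matrix (Fin m) (Fin r) ℝ) (hL : Lᵀ * L = 1)
    (t t₁ t₂ : Fin m → ℝ) (ht : t = t₁ + t₂)
    (ht₁ : L *ᵥ (Lᵀ *ᵥ t₁) = t₁) (ht₂ : Lᵀ *ᵥ t₂ = 0)
    (P : Matrix (Fin s) (Fin m) ℝ)
    (hP : ∃ f : Fin s → Fin m, Function.Injective f ∧
      ∀ i j, P i j = if j = f i then 1 else 0)
    (hrank : (P * L).rank = r)
    (xtil xstar : Fin r → ℝ)
    (hxtil : xtil = pinv (P * L) *ᵥ (P *ᵥ t))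
    (hxstar : xstar = Lᵀ *ᵥ t₁)
    (p : ℝ) (hp : 0 < p)
    (hsmin : Real.sqrt (p / 2) ≤ sMin (P * L))
    (hPt₂ : enorm' (P *ᵥ t₂) ≤ Real.sqrt (7 * p) / 2 * enorm' t₂) :
    enorm' t₂ ≤ enorm' (L *ᵥ xtil - t) ∧
    enorm' (L *ᵥ xtil - t) ≤ 3 / Real.sqrt 2 * enorm' t₂ :=
  partial_ls_residual_bounds_general L hL t t₁ t₂ ht ht₁ ht₂ P xtil hxtil p hp hsmin hPt₂
end

section
/- Let A ∈ ℝ^{n×r} have orthonormal columns, and let X ∈ ℝ^{n×r} have full column rank with QR decomposition X = QR (Q with orthonormal columns, R invertible upper triangular). Suppose there exists X₀ ∈ ℝ^{n×r} whose columns all lie in R(A), with ‖X − X₀‖₂ ≤ ε and σ_min(X) ≥ σ > 0. Then ‖sin Θ(Q, A)‖ ≤ ε/σ. -/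
open Matrix
open scoped RealInnerProductSpace Matrix.Norms.L2Operator

/-! The columns of `X₀` lie in `R(A)`, so the orthogonal projector `P = I - AAᵀ` kills `X₀` and
`P Q = P X R⁻¹ = P (X - X₀) R⁻¹`. Hence `‖P Q‖ ≤ ‖P‖ ‖X - X₀‖ ‖R⁻¹‖ ≤ ε ‖R⁻¹‖`, and
`‖R⁻¹‖ ≤ 1 / σ_min(R) = 1 / σ_min(X) ≤ 1 / σ` because `RᵀR = XᵀX` (as `QᵀQ = I`) and
`σ_min(R) ‖u‖ ≤ ‖R u‖` by the Rayleigh bound for `RᵀR`. -/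

/-- Spectral norm (operator 2-norm) of a real matrix. -/
noncomputable def specNorm {m n : Type*} [Fintype m] [Fintype n] [DecidableEq n]
    (A : Matrix m n ℝ) : ℝ :=
  ‖LinearMap.toContinuousLinearMap (Matrix.toEuclideanLin A)‖

variable {l m n : Type*} [Fintype l] [Fintype m] [Fintype n]

theorem Matrix.isStarProjection_mul_conjTranspose {α : Type*} [CommRing α] [StarRing α]
    [DecidableEq m] {A : Matrix n m α} (hA : Aᴴ * A = 1) : IsStarProjection (A * Aᴴ) where
  isIdempotentElem := by
    rw [IsIdempotentElem, Matrix.mul_assoc, ← Matrix.mul_assoc Aᴴ, hA, Matrix.one_mul]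
  isSelfAdjoint := by
    rw [IsSelfAdjoint, star_eq_conjTranspose, conjTranspose_mul, conjTranspose_conjTranspose]

theorem Matrix.IsHermitian.toEuclideanLin_eigenvectorBasis [DecidableEq n] {M : Matrix n n ℝ}
    (hM : M.IsHermitian) (i : n) :
    toEuclideanLin M (hM.eigenvectorBasis i) = hM.eigenvalues i • hM.eigenvectorBasis i :=
  congrArg (WithLp.toLp 2) (hM.mulVec_eigenvectorBasis i)

theorem Matrix.IsHermitian.iInf_eigenvalues_mul_norm_sq_le [DecidableEq n] {M : Matrix n n ℝ}
    (hM : M.IsHermitian) (v : EuclideanSpace ℝ n) :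
    (⨅ i, hM.eigenvalues i) * ‖v‖ ^ 2 ≤ ⟪v, toEuclideanLin M v⟫ := by
  set b := hM.eigenvectorBasis
  have hnorm : ‖v‖ ^ 2 = ∑ i, ⟪v, b i⟫ ^ 2 := by
    simp_rw [← real_inner_self_eq_norm_sq, ← b.sum_inner_mul_inner v v, real_inner_comm v, sq]
  have hquad : ⟪v, toEuclideanLin M v⟫ = ∑ i, hM.eigenvalues i * ⟪v, b i⟫ ^ 2 := by
    rw [← b.sum_inner_mul_inner]
    refine Finset.sum_congr rfl fun i _ => ?_
    rw [← isSymmetric_toEuclideanLin_iff.mpr hM, hM.toEuclideanLin_eigenvectorBasis,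
      real_inner_smul_left, real_inner_comm v]
    ring
  rw [hnorm, hquad, Finset.mul_sum]
  exact Finset.sum_le_sum fun i _ =>
    mul_le_mul_of_nonneg_right (ciInf_le (Finite.bddBelow_range _) i) (sq_nonneg _)

theorem norm_toEuclideanLin_sq [DecidableEq n] (A : Matrix m n ℝ) (v : EuclideanSpace ℝ n) :
    ‖toEuclideanLin A v‖ ^ 2 = ⟪v, toEuclideanLin (Aᴴ * A) v⟫ := by
  classical
  rw [toLpLin_mul_same, LinearMap.comp_apply, toEuclideanLin_conjTranspose_eq_adjoint,
    LinearMap.adjoint_inner_right, real_inner_self_eq_norm_sq]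

theorem specNorm_nonneg [DecidableEq n] (A : Matrix m n ℝ) : 0 ≤ specNorm A := norm_nonneg _

-- `specNorm` is definitionally the norm of the scoped instance `Matrix.Norms.L2Operator`.
theorem specNorm_mul_le [DecidableEq m] [DecidableEq n] (A : Matrix l m ℝ) (B : Matrix m n ℝ) :
    specNorm (A * B) ≤ specNorm A * specNorm B :=
  l2_opNorm_mul A B

theorem specNorm_one_sub_mul_transpose_le_one [DecidableEq m] [DecidableEq n]
    {A : Matrix n m ℝ} (hA : Aᵀ * A = 1) : specNorm (1 - A * Aᵀ) ≤ 1 := by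
  rw [← conjTranspose_eq_transpose_of_trivial] at hA ⊢
  exact (isStarProjection_mul_conjTranspose hA).one_sub.norm_le

theorem sMin_mul_norm_le [DecidableEq n] (A : Matrix m n ℝ) (v : EuclideanSpace ℝ n) :
    sMin A * ‖v‖ ≤ ‖toEuclideanLin A v‖ := by
  have hA := isHermitian_conjTranspose_mul_self A
  have hinf : 0 ≤ ⨅ i, hA.eigenvalues i :=
    Real.iInf_nonneg (eigenvalues_conjTranspose_mul_self_nonneg A)
  have hs : 0 ≤ sMin A := Real.sqrt_nonneg _
  rw [← pow_le_pow_iff_left₀ (mul_nonneg hs (norm_nonneg v)) (norm_nonneg _) two_ne_zero,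
    mul_pow, sMin, Real.sq_sqrt hinf, norm_toEuclideanLin_sq]
  exact hA.iInf_eigenvalues_mul_norm_sq_le v

theorem sMin_eq_of_conjTranspose_mul_self_eq [DecidableEq n] {A : Matrix l n ℝ}
    {B : Matrix m n ℝ} (h : Aᴴ * A = Bᴴ * B) : sMin A = sMin B := by
  simp only [sMin, h]

theorem sMin_mul_of_conjTranspose_mul_self [DecidableEq m] [DecidableEq n] {Q : Matrix l m ℝ}
    (hQ : Qᴴ * Q = 1) (R : Matrix m n ℝ) : sMin (Q * R) = sMin R := by
  refine sMin_eq_of_conjTranspose_mul_self_eq ?_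
  rw [conjTranspose_mul, Matrix.mul_assoc, ← Matrix.mul_assoc Qᴴ, hQ, Matrix.one_mul]

theorem specNorm_nonsing_inv_le [DecidableEq n] {R : Matrix n n ℝ} (hR : IsUnit R) {σ : ℝ}
    (hσ : 0 < σ) (hσR : σ ≤ sMin R) : specNorm R⁻¹ ≤ σ⁻¹ := by
  refine ContinuousLinearMap.opNorm_le_bound _ (inv_nonneg.mpr hσ.le) fun v => ?_
  rw [inv_mul_eq_div, le_div_iff₀' hσ]
  calc σ * ‖toEuclideanLin R⁻¹ v‖
      ≤ sMin R * ‖toEuclideanLin R⁻¹ v‖ := by gcongr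
    _ ≤ ‖toEuclideanLin R (toEuclideanLin R⁻¹ v)‖ := sMin_mul_norm_le R _
    _ = ‖v‖ := by
      rw [← LinearMap.comp_apply, ← toLpLin_mul_same,
        mul_nonsing_inv R ((isUnit_iff_isUnit_det R).mp hR), toLpLin_one, LinearMap.id_apply]

theorem sinTheta_qr_perturbation_general {n r : ℕ}
    (A X X₀ Q : Matrix (Fin n) (Fin r) ℝ) (R : Matrix (Fin r) (Fin r) ℝ)
    (hA : Aᵀ * A = 1)
    (hQ : Qᵀ * Q = 1)
    (hQR : X = Q * R)
    (hRinv : IsUnit R)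
    (hX₀ : A * Aᵀ * X₀ = X₀)
    (ε σ : ℝ) (hσ : 0 < σ)
    (hdiff : specNorm (X - X₀) ≤ ε)
    (hsmin : σ ≤ sMin X) :
    specNorm ((1 - A * Aᵀ) * Q) ≤ ε / σ := by
  rw [← conjTranspose_eq_transpose_of_trivial] at hQ
  have hσR : σ ≤ sMin R := by rwa [hQR, sMin_mul_of_conjTranspose_mul_self hQ] at hsmin
  have hQX : Q = X * R⁻¹ := by
    rw [hQR, Matrix.mul_assoc, mul_nonsing_inv R ((isUnit_iff_isUnit_det R).mp hRinv),
      Matrix.mul_one]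
  have hPX₀ : (1 - A * Aᵀ) * X₀ = 0 := by rw [Matrix.sub_mul, Matrix.one_mul, hX₀, sub_self]
  have hPQ : (1 - A * Aᵀ) * Q = (1 - A * Aᵀ) * (X - X₀) * R⁻¹ := by
    rw [hQX, Matrix.mul_sub, hPX₀, sub_zero, Matrix.mul_assoc]
  calc specNorm ((1 - A * Aᵀ) * Q)
      ≤ specNorm (1 - A * Aᵀ) * specNorm (X - X₀) * specNorm R⁻¹ := by
        rw [hPQ]
        refine (specNorm_mul_le _ _).trans ?_
        gcongr
        exacts [specNorm_nonneg _, specNorm_mul_le _ _]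
    _ ≤ 1 * ε * σ⁻¹ :=
        mul_le_mul (mul_le_mul (specNorm_one_sub_mul_transpose_le_one hA) hdiff
            (specNorm_nonneg _) zero_le_one)
          (specNorm_nonsing_inv_le hRinv hσ hσR) (specNorm_nonneg _)
          (by linarith [specNorm_nonneg (X - X₀)])
    _ = ε / σ := by ring

/-- Let `A ∈ ℝ^{n×r}` have orthonormal columns, and let `X = QR` be a QR decomposition
of a full-column-rank `X` (`Q` with orthonormal columns, `R` invertible upper triangular).
If there is `X₀` with columns in `R(A)` such that `‖X − X₀‖₂ ≤ ε` and `σ_min(X) ≥ σ > 0`,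
then `‖sin Θ(Q, A)‖ = ‖(I − AAᵀ)Q‖₂ ≤ ε/σ`. -/
theorem sinTheta_qr_perturbation {n r : ℕ}
    (A X X₀ Q : Matrix (Fin n) (Fin r) ℝ) (R : Matrix (Fin r) (Fin r) ℝ)
    (hA : Aᵀ * A = 1)
    (hQ : Qᵀ * Q = 1)
    (hQR : X = Q * R)
    (hRtri : ∀ i j : Fin r, j < i → R i j = 0)
    (hRinv : IsUnit R)
    (hX₀ : A * Aᵀ * X₀ = X₀)
    (ε σ : ℝ) (hσ : 0 < σ)
    (hdiff : specNorm (X - X₀) ≤ ε)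
    (hsmin : σ ≤ sMin X) :
    specNorm ((1 - A * Aᵀ) * Q) ≤ ε / σ :=
  sinTheta_qr_perturbation_general A X X₀ Q R hA hQ hQR hRinv hX₀ ε σ hσ hdiff hsmin
end
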